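/- Let (u₁, u₂) be a solution of the deformed Chern–Simons system with parameter ε ∈ [0,1] and exponents (β₁, β₂). Then the total magnetic fluxes are quantized: ∫_{ℝ²} e^{u₂}(1 − e^{u₁}) dx = 4π(β₁ + N₁) and ∫_{ℝ²} e^{u₁}(1 − e^{u₂}) dx = 4π(β₂ + N₂). -/

import Mathlib

open MeasureTheory Metric Filter

noncomputable section

/-- The Euclidean plane ℝ². -/
abbrev Plane := EuclideanSpace ℝ (Fin 2)

/-- The Laplacian of `f : ℝ² → ℝ`. -/
noncomputable def lap (f : Plane → ℝ) (x : Plane) : ℝ :=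
  ∑ i : Fin 2, iteratedFDeriv ℝ 2 f x (fun _ => EuclideanSpace.single i 1)

/-- The singular part `f_{ε}(x) = 2 ∑ⱼ ln|x - ε pⱼ|` attached to the vortex points
`ε p₁, …, ε p_N`. -/
noncomputable def fV {N : ℕ} (p : Fin N → Plane) (ε : ℝ) (x : Plane) : ℝ :=
  2 * ∑ j, Real.log ‖x - ε • p j‖

/-- The continuous function `e^{u} = (∏ⱼ |x - ε pⱼ|²) e^{v(x)}`, where `u = f_ε + v`. -/
noncomputable def eU {N : ℕ} (p : Fin N → Plane) (ε : ℝ) (v : Plane → ℝ) (x : Plane) : ℝ :=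
  (∏ j, ‖x - ε • p j‖ ^ 2) * Real.exp (v x)

/-- The full solution `u = f_ε + v`. -/
noncomputable def uF {N : ℕ} (p : Fin N → Plane) (ε : ℝ) (v : Plane → ℝ) (x : Plane) : ℝ :=
  fV p ε x + v x

/-- A solution of the deformed Chern–Simons system with parameter `ε` and exponents
`(β₁, β₂)`: a pair `uᵢ = f_{iε} + vᵢ` with `vᵢ ∈ C²(ℝ²)` such that
`Δv₁ + e^{u₂}(1 - e^{u₁}) = 0` and `Δv₂ + e^{u₁}(1 - e^{u₂}) = 0` on ℝ²
(with `e^{uᵢ}` the continuous functions `eU`), `u₁, u₂ < 0` off the vortex points,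
`uᵢ(x) + 2βᵢ ln|x|` bounded on `{|x| ≥ 1}`, and
`|x|·|∇vᵢ(x) + 2(βᵢ+Nᵢ)x/|x|²| → 0` as `|x| → ∞`. -/
structure CSsol (N₁ N₂ : ℕ) (p₁ : Fin N₁ → Plane) (p₂ : Fin N₂ → Plane)
    (β₁ β₂ ε : ℝ) : Type where
  v₁ : Plane → ℝ
  v₂ : Plane → ℝ
  cd₁ : ContDiff ℝ 2 v₁
  cd₂ : ContDiff ℝ 2 v₂
  pde₁ : ∀ x : Plane, lap v₁ x + eU p₂ ε v₂ x * (1 - eU p₁ ε v₁ x) = 0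
  pde₂ : ∀ x : Plane, lap v₂ x + eU p₁ ε v₁ x * (1 - eU p₂ ε v₂ x) = 0
  neg₁ : ∀ x : Plane, (∀ j, x ≠ ε • p₁ j) → uF p₁ ε v₁ x < 0
  neg₂ : ∀ x : Plane, (∀ j, x ≠ ε • p₂ j) → uF p₂ ε v₂ x < 0
  asymp₁ : ∃ C : ℝ, ∀ x : Plane, 1 ≤ ‖x‖ → |uF p₁ ε v₁ x + 2 * β₁ * Real.log ‖x‖| ≤ C
  asymp₂ : ∃ C : ℝ, ∀ x : Plane, 1 ≤ ‖x‖ → |uF p₂ ε v₂ x + 2 * β₂ * Real.log ‖x‖| ≤ C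
  grad₁ : ∀ δ : ℝ, 0 < δ → ∃ R : ℝ, ∀ x : Plane, R ≤ ‖x‖ →
    ‖x‖ * ‖gradient v₁ x + ((2 * (β₁ + (N₁ : ℝ))) / ‖x‖ ^ 2) • x‖ < δ
  grad₂ : ∀ δ : ℝ, 0 < δ → ∃ R : ℝ, ∀ x : Plane, R ≤ ‖x‖ →
    ‖x‖ * ‖gradient v₂ x + ((2 * (β₂ + (N₂ : ℝ))) / ‖x‖ ^ 2) • x‖ < δ

/-!
Integrate `-Δv₁ = e^{u₂}(1 - e^{u₁})` over the square `[-R, R]²`: by Green's identity this is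
minus the outward flux of `∇v₁`. Since `∇v₁(x) = -2(β₁ + N₁) x / |x|² + o(1 / |x|)`, each of the
four sides contributes `-π(β₁ + N₁) + o(1)`, so the integrals over the squares tend to
`4π(β₁ + N₁)`. The integrand is nonnegative because `u₁ < 0`, so monotone convergence shows that
it is integrable with exactly this integral. The second identity is the same with `1 ↔ 2`.
-/

open Set Topology

def planeEquivProd : Plane ≃L[ℝ] ℝ × ℝ :=
  (EuclideanSpace.equiv (Fin 2) ℝ).trans (ContinuousLinearEquiv.finTwoArrow ℝ ℝ)

lemma planeEquivProd_symm_one_zero :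
    planeEquivProd.symm (1, 0) = EuclideanSpace.single 0 1 := by
  ext i; fin_cases i <;> rfl

lemma planeEquivProd_symm_zero_one :
    planeEquivProd.symm (0, 1) = EuclideanSpace.single 1 1 := by
  ext i; fin_cases i <;> rfl

lemma norm_planeEquivProd_symm_sq (z : ℝ × ℝ) :
    ‖planeEquivProd.symm z‖ ^ 2 = z.1 ^ 2 + z.2 ^ 2 := by
  simp only [EuclideanSpace.norm_sq_eq, Fin.sum_univ_two, Real.norm_eq_abs, sq_abs]
  rfl

lemma measurePreserving_planeEquivProd : MeasurePreserving planeEquivProd :=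
  (volume_preserving_finTwoArrow ℝ).comp (PiLp.volume_preserving_ofLp (Fin 2))

lemma integral_comp_planeEquivProd_symm (F : Plane → ℝ) :
    ∫ z, F (planeEquivProd.symm z) = ∫ x, F x := by
  simpa using (measurePreserving_planeEquivProd.integral_comp
    planeEquivProd.toHomeomorph.measurableEmbedding (fun z => F (planeEquivProd.symm z))).symm

lemma lap_eq_sum_fderiv_fderiv (v : Plane → ℝ) (x : Plane) :
    lap v x = ∑ i : Fin 2,
      fderiv ℝ (fderiv ℝ v) x (EuclideanSpace.single i 1) (EuclideanSpace.single i 1) := by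
  simp only [lap, iteratedFDeriv_two_apply]

lemma continuous_lap {v : Plane → ℝ} (hv : ContDiff ℝ 2 v) : Continuous (lap v) := by
  unfold lap
  fun_prop (disch := exact hv.continuous_iteratedFDeriv le_rfl)

lemma abs_fderiv_single_add_le_norm_gradient_add {ι : Type*} [Fintype ι] [DecidableEq ι]
    (v : EuclideanSpace ℝ ι → ℝ) (a : ℝ) (x : EuclideanSpace ℝ ι) (i : ι) :
    |fderiv ℝ v x (EuclideanSpace.single i 1) + a * x i| ≤ ‖gradient v x + a • x‖ := by
  have h : fderiv ℝ v x (EuclideanSpace.single i 1) + a * x i =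
      inner ℝ (gradient v x + a • x) (EuclideanSpace.single i 1) := by
    simp [inner_add_left, inner_gradient_left, EuclideanSpace.inner_single_right]
  simpa [h] using abs_real_inner_le_norm (gradient v x + a • x) (EuclideanSpace.single i 1)

/-- Green's identity `∫_Q Δv = ∮_{∂Q} ∂ₙv` on the square `Q = [-R, R]²`. -/
theorem setIntegral_square_lap {v : Plane → ℝ} (hv : ContDiff ℝ 2 v) {R : ℝ} (hR : 0 ≤ R) :
    ∫ z in Icc (-R, -R) (R, R), lap v (planeEquivProd.symm z) =
      (((∫ t in -R..R, fderiv ℝ v (planeEquivProd.symm (t, R)) (EuclideanSpace.single 1 1)) -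
        ∫ t in -R..R, fderiv ℝ v (planeEquivProd.symm (t, -R)) (EuclideanSpace.single 1 1)) +
        ∫ t in -R..R, fderiv ℝ v (planeEquivProd.symm (R, t)) (EuclideanSpace.single 0 1)) -
        ∫ t in -R..R, fderiv ℝ v (planeEquivProd.symm (-R, t)) (EuclideanSpace.single 0 1) := by
  set e := planeEquivProd
  have hv' : ContDiff ℝ 1 (fderiv ℝ v) := hv.fderiv_right (by norm_num)
  let D : ℝ × ℝ → ℝ × ℝ →L[ℝ] Plane →L[ℝ] ℝ := fun z =>
    (fderiv ℝ (fderiv ℝ v) (e.symm z)).comp (e.symm : ℝ × ℝ →L[ℝ] Plane)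
  have hD : ∀ (w : Plane) (z : ℝ × ℝ), HasFDerivAt (fun z => fderiv ℝ v (e.symm z) w)
      ((ContinuousLinearMap.apply ℝ ℝ w).comp (D z)) z := fun w z =>
    (ContinuousLinearMap.apply ℝ ℝ w).hasFDerivAt.comp z
      (((hv'.differentiable one_ne_zero).differentiableAt.hasFDerivAt).comp z e.symm.hasFDerivAt)
  have hdiv : ∀ z, (ContinuousLinearMap.apply ℝ ℝ (EuclideanSpace.single 0 1)).comp (D z) (1, 0) +
      (ContinuousLinearMap.apply ℝ ℝ (EuclideanSpace.single 1 1)).comp (D z) (0, 1) =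
      lap v (e.symm z) := fun z => by
    simp [D, e, lap_eq_sum_fderiv_fderiv, Fin.sum_univ_two, planeEquivProd_symm_one_zero,
      planeEquivProd_symm_zero_one]
  have hcont : ∀ w : Plane, Continuous fun z => fderiv ℝ v (e.symm z) w := fun w =>
    (hv'.continuous.comp e.symm.continuous).clm_apply continuous_const
  have key := integral_divergence_prod_Icc_of_hasFDerivAt_off_countable_of_le
    (fun z => fderiv ℝ v (e.symm z) (EuclideanSpace.single 0 1))
    (fun z => fderiv ℝ v (e.symm z) (EuclideanSpace.single 1 1))
    (fun z => (ContinuousLinearMap.apply ℝ ℝ (EuclideanSpace.single 0 1)).comp (D z))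
    (fun z => (ContinuousLinearMap.apply ℝ ℝ (EuclideanSpace.single 1 1)).comp (D z))
    (-R, -R) (R, R) ⟨neg_le_self hR, neg_le_self hR⟩ ∅ countable_empty
    (hcont _).continuousOn (hcont _).continuousOn (fun z _ => hD _ z) (fun z _ => hD _ z)
    (by simp only [hdiv]; exact ((continuous_lap hv).comp e.symm.continuous).integrableOn_Icc)
  simpa only [hdiv] using key

lemma abs_integral_sub_mul_pi_div_two_le {h : ℝ → ℝ} {a R δ : ℝ} (hR : 0 < R)
    (hh : ContinuousOn h (uIcc (-R) R))
    (hb : ∀ t ∈ uIcc (-R) R, |h t - a * (R / (R ^ 2 + t ^ 2))| ≤ δ / R) :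
    |(∫ t in -R..R, h t) - a * (Real.pi / 2)| ≤ 2 * δ := by
  have hk : Continuous fun t : ℝ => a * (R / (R ^ 2 + t ^ 2)) :=
    continuous_const.mul (continuous_const.div (by fun_prop) fun t => by positivity)
  have harctan : ∫ t in -R..R, R / (R ^ 2 + t ^ 2) = Real.pi / 2 := by
    rw [integral_div_sq_add_sq, neg_div, div_self hR.ne', Real.arctan_neg, Real.arctan_one]
    ring
  rw [← harctan, ← intervalIntegral.integral_const_mul,
    ← intervalIntegral.integral_sub hh.intervalIntegrable (hk.intervalIntegrable _ _)]
  calc |∫ t in -R..R, h t - a * (R / (R ^ 2 + t ^ 2))|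
      ≤ δ / R * |R - -R| := by
        rw [← Real.norm_eq_abs]
        exact intervalIntegral.norm_integral_le_of_norm_le_const fun t ht =>
          hb t (uIoc_subset_uIcc ht)
    _ = 2 * δ := by rw [abs_of_pos (by linarith)]; field_simp; ring

lemma abs_integral_fderiv_side_add_le {v : Plane → ℝ} (hv : Continuous (fderiv ℝ v))
    {c R δ : ℝ} (hR : 0 < R)
    (hgrad : ∀ x : Plane, R ≤ ‖x‖ → ‖x‖ * ‖gradient v x + (c / ‖x‖ ^ 2) • x‖ ≤ δ)
    {φ : ℝ → Plane} (hφ : Continuous φ) (hφn : ∀ t, ‖φ t‖ ^ 2 = R ^ 2 + t ^ 2)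
    {i : Fin 2} {s : ℝ} (hφi : ∀ t, φ t i = s) :
    |(∫ t in -R..R, fderiv ℝ v (φ t) (EuclideanSpace.single i 1)) + c * s / R * (Real.pi / 2)|
      ≤ 2 * δ := by
  have hpt : ∀ t, |fderiv ℝ v (φ t) (EuclideanSpace.single i 1) -
      -(c * s / R) * (R / (R ^ 2 + t ^ 2))| ≤ δ / R := fun t => by
    have hRx : R ≤ ‖φ t‖ := by nlinarith [hφn t, norm_nonneg (φ t), sq_nonneg t]
    have hx : 0 < ‖φ t‖ := hR.trans_le hRx
    have hδ : 0 ≤ δ := (mul_nonneg hx.le (norm_nonneg _)).trans (hgrad _ hRx)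
    calc |fderiv ℝ v (φ t) (EuclideanSpace.single i 1) - -(c * s / R) * (R / (R ^ 2 + t ^ 2))|
        = |fderiv ℝ v (φ t) (EuclideanSpace.single i 1) + c / ‖φ t‖ ^ 2 * φ t i| := by
          rw [hφn, hφi]; field_simp; ring_nf
      _ ≤ ‖gradient v (φ t) + (c / ‖φ t‖ ^ 2) • φ t‖ :=
          abs_fderiv_single_add_le_norm_gradient_add v _ (φ t) i
      _ ≤ δ / ‖φ t‖ := by rw [le_div_iff₀ hx, mul_comm]; exact hgrad _ hRx
      _ ≤ δ / R := div_le_div_of_nonneg_left hδ hR hRx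
  simpa only [neg_mul, sub_neg_eq_add, Function.comp_apply] using
    abs_integral_sub_mul_pi_div_two_le hR
      ((hv.comp hφ).clm_apply continuous_const).continuousOn fun t _ => hpt t

/-- The flux of `-c x / |x|²` out of every square `[-R, R]²` is `-2πc`. -/
lemma abs_setIntegral_square_sub_le {v F : Plane → ℝ} (hv : ContDiff ℝ 2 v)
    (hlap : ∀ x, lap v x = -F x) {c R δ : ℝ} (hR : 0 < R)
    (hgrad : ∀ x : Plane, R ≤ ‖x‖ → ‖x‖ * ‖gradient v x + (c / ‖x‖ ^ 2) • x‖ ≤ δ) :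
    |(∫ z in Icc (-R, -R) (R, R), F (planeEquivProd.symm z)) - 2 * Real.pi * c| ≤ 8 * δ := by
  have hv' : Continuous (fderiv ℝ v) := (hv.fderiv_right (m := 1) (by norm_num)).continuous
  have hside := fun {φ : ℝ → Plane} (hφ : Continuous φ) =>
    abs_integral_fderiv_side_add_le hv' hR hgrad hφ
  have htop := hside (φ := fun t => planeEquivProd.symm (t, R)) (by fun_prop)
    (fun t => by rw [norm_planeEquivProd_symm_sq]; ring) (i := 1) (s := R) (fun _ => rfl)
  have hbot := hside (φ := fun t => planeEquivProd.symm (t, -R)) (by fun_prop)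
    (fun t => by rw [norm_planeEquivProd_symm_sq]; ring) (i := 1) (s := -R) (fun _ => rfl)
  have hright := hside (φ := fun t => planeEquivProd.symm (R, t)) (by fun_prop)
    (fun t => by rw [norm_planeEquivProd_symm_sq]) (i := 0) (s := R) (fun _ => rfl)
  have hleft := hside (φ := fun t => planeEquivProd.symm (-R, t)) (by fun_prop)
    (fun t => by rw [norm_planeEquivProd_symm_sq]; ring) (i := 0) (s := -R) (fun _ => rfl)
  have hF : ∫ z in Icc (-R, -R) (R, R), F (planeEquivProd.symm z) =
      -∫ z in Icc (-R, -R) (R, R), lap v (planeEquivProd.symm z) := by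
    simp only [hlap, integral_neg, neg_neg]
  rw [hF, setIntegral_square_lap hv hR.le]
  simp only [mul_div_assoc, neg_div, div_self hR.ne', mul_neg, mul_one] at htop hbot hright hleft
  rw [abs_le] at htop hbot hright hleft ⊢
  constructor <;> linarith [htop.1, htop.2, hbot.1, hbot.2, hright.1, hright.2, hleft.1, hleft.2]

lemma tendsto_setIntegral_square {v F : Plane → ℝ} (hv : ContDiff ℝ 2 v)
    (hlap : ∀ x, lap v x = -F x) {c : ℝ}
    (hgrad : ∀ δ : ℝ, 0 < δ → ∃ R : ℝ, ∀ x : Plane, R ≤ ‖x‖ →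
      ‖x‖ * ‖gradient v x + (c / ‖x‖ ^ 2) • x‖ < δ) :
    Tendsto (fun R : ℝ => ∫ z in Icc (-R, -R) (R, R), F (planeEquivProd.symm z)) atTop
      (𝓝 (2 * Real.pi * c)) := by
  rw [Metric.tendsto_atTop]
  intro η hη
  obtain ⟨R₀, hR₀⟩ := hgrad (η / 16) (by positivity)
  refine ⟨max R₀ 1, fun R hR => ?_⟩
  have hR₀R : R₀ ≤ R := le_of_max_le_left hR
  have hRpos : 0 < R := one_pos.trans_le (le_of_max_le_right hR)
  have h := abs_setIntegral_square_sub_le hv hlap hRpos fun x hx => (hR₀ x (hR₀R.trans hx)).le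
  rw [Real.dist_eq]
  linarith

theorem integral_eq_two_pi_mul_of_lap_eq_neg {v F : Plane → ℝ} (hv : ContDiff ℝ 2 v)
    (hF : ∀ x, 0 ≤ F x) (hlap : ∀ x, lap v x = -F x) {c : ℝ}
    (hgrad : ∀ δ : ℝ, 0 < δ → ∃ R : ℝ, ∀ x : Plane, R ≤ ‖x‖ →
      ‖x‖ * ‖gradient v x + (c / ‖x‖ ^ 2) • x‖ < δ) :
    ∫ x, F x = 2 * Real.pi * c := by
  have hFc : Continuous F := by
    convert (continuous_lap hv).neg using 1
    ext x
    simp [hlap]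
  have hcover : AECover volume atTop fun R : ℝ => Icc ((-R, -R) : ℝ × ℝ) (R, R) :=
    aecover_Icc (tendsto_atBot_diagonal.comp tendsto_neg_atTop_atBot) tendsto_atTop_diagonal
  have htend := tendsto_setIntegral_square hv hlap hgrad
  have hint := hcover.integrable_of_integral_tendsto_of_nonneg_ae _
    (fun R => (hFc.comp planeEquivProd.symm.continuous).integrableOn_Icc)
    (ae_of_all _ fun z => hF _) htend
  rw [← integral_comp_planeEquivProd_symm]
  exact tendsto_nhds_unique (hcover.integral_tendsto_of_countably_generated hint) htend

section eU

variable {N : ℕ} (p : Fin N → Plane) (ε : ℝ) {v : Plane → ℝ}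

lemma eU_nonneg (x : Plane) : 0 ≤ eU p ε v x := by
  unfold eU
  positivity

lemma eU_eq_exp_uF {x : Plane} (hx : ∀ j, x ≠ ε • p j) : eU p ε v x = Real.exp (uF p ε v x) := by
  have hpos : ∀ j, 0 < ‖x - ε • p j‖ := fun j => norm_pos_iff.2 (sub_ne_zero.2 (hx j))
  simp only [eU, uF, fV, Real.exp_add, Finset.mul_sum, Real.exp_sum]
  congr 1
  refine Finset.prod_congr rfl fun j _ => ?_
  rw [two_mul, Real.exp_add, Real.exp_log (hpos j), sq]

lemma eU_le_one (hneg : ∀ x : Plane, (∀ j, x ≠ ε • p j) → uF p ε v x < 0) (x : Plane) :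
    eU p ε v x ≤ 1 := by
  by_cases hx : ∀ j, x ≠ ε • p j
  · rw [eU_eq_exp_uF p ε hx]
    exact Real.exp_le_one_iff.2 (hneg x hx).le
  · obtain ⟨j, rfl⟩ := not_forall_not.1 hx
    simp [eU, Finset.prod_eq_zero (Finset.mem_univ j)]

end eU

lemma integral_eU_mul_one_sub_eU {N M : ℕ} {p : Fin N → Plane} {q : Fin M → Plane} {ε β : ℝ}
    {v w : Plane → ℝ} (hv : ContDiff ℝ 2 v)
    (hpde : ∀ x, lap v x + eU q ε w x * (1 - eU p ε v x) = 0)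
    (hneg : ∀ x : Plane, (∀ j, x ≠ ε • p j) → uF p ε v x < 0)
    (hgrad : ∀ δ : ℝ, 0 < δ → ∃ R : ℝ, ∀ x : Plane, R ≤ ‖x‖ →
      ‖x‖ * ‖gradient v x + ((2 * (β + (N : ℝ))) / ‖x‖ ^ 2) • x‖ < δ) :
    ∫ x, eU q ε w x * (1 - eU p ε v x) = 4 * Real.pi * (β + (N : ℝ)) := by
  rw [integral_eq_two_pi_mul_of_lap_eq_neg hv
    (fun x => mul_nonneg (eU_nonneg q ε x) (sub_nonneg.2 (eU_le_one p ε hneg x)))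
    (fun x => eq_neg_of_add_eq_zero_left (hpde x)) hgrad]
  ring

theorem stmt9_general (N₁ N₂ : ℕ) (p₁ : Fin N₁ → Plane) (p₂ : Fin N₂ → Plane)
    (β₁ β₂ : ℝ)
    (ε : ℝ)
    (sol : CSsol N₁ N₂ p₁ p₂ β₁ β₂ ε) :
    (∫ x : Plane, eU p₂ ε sol.v₂ x * (1 - eU p₁ ε sol.v₁ x)) =
        4 * Real.pi * (β₁ + (N₁ : ℝ)) ∧
      (∫ x : Plane, eU p₁ ε sol.v₁ x * (1 - eU p₂ ε sol.v₂ x)) =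
        4 * Real.pi * (β₂ + (N₂ : ℝ)) :=
  ⟨integral_eU_mul_one_sub_eU sol.cd₁ sol.pde₁ sol.neg₁ sol.grad₁,
    integral_eU_mul_one_sub_eU sol.cd₂ sol.pde₂ sol.neg₂ sol.grad₂⟩

/-- Flux quantization for solutions of the deformed Chern–Simons
system: `∫ e^{u₂}(1 - e^{u₁}) = 4π(β₁ + N₁)` and `∫ e^{u₁}(1 - e^{u₂}) = 4π(β₂ + N₂)`. -/
theorem stmt9 (N₁ N₂ : ℕ) (p₁ : Fin N₁ → Plane) (p₂ : Fin N₂ → Plane)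
    (β₁ β₂ : ℝ) (hβ₁ : 1 < β₁) (hβ₂ : 1 < β₂)
    (hcond : (β₁ - 1) * (β₂ - 1) > ((N₁ : ℝ) + 1) * ((N₂ : ℝ) + 1))
    (ε : ℝ) (hε : ε ∈ Set.Icc (0 : ℝ) 1)
    (sol : CSsol N₁ N₂ p₁ p₂ β₁ β₂ ε) :
    (∫ x : Plane, eU p₂ ε sol.v₂ x * (1 - eU p₁ ε sol.v₁ x)) =
        4 * Real.pi * (β₁ + (N₁ : ℝ)) ∧
      (∫ x : Plane, eU p₁ ε sol.v₁ x * (1 - eU p₂ ε sol.v₂ x)) =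
        4 * Real.pi * (β₂ + (N₂ : ℝ)) :=
  stmt9_general N₁ N₂ p₁ p₂ β₁ β₂ ε sol
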